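/- arXiv:1906.04090 — 2 statements merged into one kernel-verified Lean document; each statement's English description precedes it below -/
import Mathlib

section
/- Let Q : ℂ^{N_r} → ℂ^{N_r} be a measurable map satisfying Q(i·r) = i·Q(r) for all r ∈ ℂ^{N_r} (where i is the imaginary unit and multiplication is componentwise scalar multiplication), let H ∈ ℂ^{N_r×N_t} and x ∈ ℂ^{N_t} be deterministic, and let z be a ℂ^{N_r}-valued random vector whose distribution is invariant under multiplication by i (i·z has the same law as z). Then Q(H(i·x)+z) has the same distribution as i·Q(Hx+z); in particular, if Q(Hx+z) is integrable, then E[Q(H(i·x)+z)] = i·E[Q(Hx+z)]. -/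
open MeasureTheory ProbabilityTheory

/-! Since `H (i x) = i (H x)` and `Q` commutes with `i`, pathwise
`Q (H (i x) + i z) = i Q (H x + z)`; replacing `i z` by `z`, which has the same law,
gives the claim. -/

theorem ProbabilityTheory.identDistrib_smul_add_of_map_smul_eq
    {M E F Ω : Type*} [AddZeroClass E] [DistribSMul M E] [SMul M F]
    [MeasurableSpace E] [MeasurableSpace F] [MeasurableSpace Ω]
    [MeasurableAdd E] [MeasurableConstSMul M E]
    {P : Measure Ω} {a : M} {f : E → F} (hf : Measurable f) (hfa : ∀ r, f (a • r) = a • f r)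
    (c : E) {z : Ω → E} (hz : Measurable z) (hza : P.map (fun ω => a • z ω) = P.map z) :
    IdentDistrib (fun ω => f (a • c + z ω)) (fun ω => a • f (c + z ω)) P P := by
  have hinv : IdentDistrib (fun ω => a • z ω) z P P :=
    ⟨(hz.const_smul a).aemeasurable, hz.aemeasurable, hza⟩
  have hrot : (fun ω => a • f (c + z ω)) = fun ω => f (a • c + a • z ω) := by
    funext ω; rw [← smul_add, hfa]
  rw [hrot]
  exact (hinv.comp (hf.comp (measurable_const_add (a • c)))).symm

theorem quantizer_rotation_label_rotation_general
    {Nr Nt : ℕ} {Ω : Type*} [MeasurableSpace Ω]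
    (P : Measure Ω)
    (Q : (Fin Nr → ℂ) → (Fin Nr → ℂ)) (hQmeas : Measurable Q)
    (hQrot : ∀ r : Fin Nr → ℂ, Q (Complex.I • r) = Complex.I • Q r)
    (H : Matrix (Fin Nr) (Fin Nt) ℂ) (x : Fin Nt → ℂ)
    (z : Ω → (Fin Nr → ℂ)) (hz : Measurable z)
    (hzrot : P.map (fun ω => Complex.I • z ω) = P.map z) :
    P.map (fun ω => Q (H.mulVec (Complex.I • x) + z ω)) =
      P.map (fun ω => Complex.I • Q (H.mulVec x + z ω)) ∧
    (Integrable (fun ω => Q (H.mulVec x + z ω)) P →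
      (∫ ω, Q (H.mulVec (Complex.I • x) + z ω) ∂P) =
        Complex.I • ∫ ω, Q (H.mulVec x + z ω) ∂P) := by
  have hd := identDistrib_smul_add_of_map_smul_eq hQmeas hQrot (H.mulVec x) hz hzrot
  rw [← Matrix.mulVec_smul] at hd
  exact ⟨hd.map_eq, fun _ => by rw [hd.integral_eq, integral_smul]⟩

/-- Condition-2 part of Proposition 1: with a quantizer commuting with
multiplication by `i` and noise whose law is invariant under multiplication
by `i`, the quantized output for the `i`-rotated label has the law of the
`i`-rotated quantized output for the original label; in particular the
conditional means are `i`-rotations of each other. -/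
theorem quantizer_rotation_label_rotation
    {Nr Nt : ℕ} {Ω : Type*} [MeasurableSpace Ω]
    (P : Measure Ω) [IsProbabilityMeasure P]
    (Q : (Fin Nr → ℂ) → (Fin Nr → ℂ)) (hQmeas : Measurable Q)
    (hQrot : ∀ r : Fin Nr → ℂ, Q (Complex.I • r) = Complex.I • Q r)
    (H : Matrix (Fin Nr) (Fin Nt) ℂ) (x : Fin Nt → ℂ)
    (z : Ω → (Fin Nr → ℂ)) (hz : Measurable z)
    (hzrot : P.map (fun ω => Complex.I • z ω) = P.map z) :
    P.map (fun ω => Q (H.mulVec (Complex.I • x) + z ω)) =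
      P.map (fun ω => Complex.I • Q (H.mulVec x + z ω)) ∧
    (Integrable (fun ω => Q (H.mulVec x + z ω)) P →
      (∫ ω, Q (H.mulVec (Complex.I • x) + z ω) ∂P) =
        Complex.I • ∫ ω, Q (H.mulVec x + z ω) ∂P) :=
  quantizer_rotation_label_rotation_general P Q hQmeas hQrot H x z hz hzrot
end

section
/- Let N_r ≥ 1 and let H be a random N_r×2 complex matrix whose entries are i.i.d. CN(0,1), i.e., all real and imaginary parts of the entries are i.i.d. real Gaussians N(0,1/2). Consider the four BPSK labels x_1 = (1,1), x_2 = (1,−1), x_3 = (−1,1), x_4 = (−1,−1) in ℂ². Define the events E_k = {sign(Hx_1) = sign(Hx_k)} for k = 2,3,4. Then: (a) P[E_4] = 0; (b) P[E_2 ∩ E_3] = 0; and consequently (c) P[E_2 ∪ E_3 ∪ E_4] = P[E_2] + P[E_3] = 2·(1/2)^{2N_r}. -/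
/-!
Write `(h₁, h₂)` for the real (or the imaginary) parts of the two entries of a row of `H`. In that
coordinate the outputs for `x₁, x₂, x₃, x₄` are `h₁ + h₂`, `h₁ - h₂`, `h₂ - h₁` and `-(h₁ + h₂)`.
Confusing `x₁` with `x₄` forces `h₁ + h₂ = 0`, and confusing `x₁` with both `x₂` and `x₃` forces
`h₁ = h₂`; both are null events since the law of `h₂` has no atoms. Off the diagonal `h₁ = h₂`
the conditions `sgn (h₁ + h₂) = sgn (h₁ - h₂)` and `sgn (h₁ + h₂) = sgn (h₂ - h₁)` are
complementary, and swapping `h₁` and `h₂` exchanges them, so each has probability `1/2`. The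
`2 N_r` coordinate pairs are independent, hence `P[E₂] = P[E₃] = (1/2)^(2 N_r)`.
-/

open MeasureTheory ProbabilityTheory
open scoped ENNReal

/-- The sign function: `+1` if `t ≥ 0` and `-1` if `t < 0`. -/
noncomputable def sgn (t : ℝ) : ℝ := if 0 ≤ t then 1 else -1

/-- The confusion event: the 1-bit quantized noiseless outputs `sign(Hx)` and
`sign(Hx')` agree in every real coordinate. -/
def confusionEvent {Nr : ℕ} {Ω : Type*} (H : Ω → Fin Nr → Fin 2 → ℂ)
    (x x' : Fin 2 → ℂ) : Set Ω :=
  {ω | ∀ m : Fin Nr,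
    sgn (∑ j, H ω m j * x j).re = sgn (∑ j, H ω m j * x' j).re ∧
    sgn (∑ j, H ω m j * x j).im = sgn (∑ j, H ω m j * x' j).im}

lemma measurable_sgn : Measurable sgn :=
  Measurable.ite measurableSet_Ici measurable_const measurable_const

lemma sgn_eq_sgn_iff {a b : ℝ} : sgn a = sgn b ↔ (0 ≤ a ↔ 0 ≤ b) := by
  unfold sgn; split_ifs <;> norm_num <;> tauto

lemma sgn_eq_sgn_neg_iff {a : ℝ} : sgn a = sgn (-a) ↔ a = 0 := by
  rw [sgn_eq_sgn_iff, neg_nonneg]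
  refine ⟨fun h => ?_, by rintro rfl; simp⟩
  rcases le_total 0 a with ha | ha
  · exact le_antisymm (h.1 ha) ha
  · exact le_antisymm ha (h.2 ha)

lemma sgn_eq_sgn_neg_iff_ne {a b : ℝ} (hb : b ≠ 0) : sgn a = sgn (-b) ↔ sgn a ≠ sgn b := by
  have : 0 ≤ -b ↔ ¬0 ≤ b := by rw [neg_nonneg, not_le]; exact hb.le_iff_lt
  simp only [ne_eq, sgn_eq_sgn_iff, this]
  tauto

theorem MeasureTheory.Measure.prod_setOf_snd_eq_null {α β : Type*} [MeasurableSpace α]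
    [MeasurableSpace β] [MeasurableEq β] (ν : Measure α) (μ : Measure β) [SFinite ν] [SFinite μ]
    [NullSingletonClass μ] {f : α → β} (hf : Measurable f) :
    (ν.prod μ) {p | p.2 = f p.1} = 0 := by
  rw [Measure.prod_apply
    (measurableSet_eq_fun measurable_snd (by fun_prop) : MeasurableSet {p : α × β | p.2 = f p.1})]
  simp

def sameSignSet (x x' : Fin 2 → ℝ) : Set (ℝ × ℝ) :=
  {p | sgn (p.1 * x 0 + p.2 * x 1) = sgn (p.1 * x' 0 + p.2 * x' 1)}

lemma measurableSet_sameSignSet (x x' : Fin 2 → ℝ) : MeasurableSet (sameSignSet x x') :=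
  measurableSet_eq_fun (measurable_sgn.comp (by fun_prop)) (measurable_sgn.comp (by fun_prop))

lemma prod_sameSignSet_swap (μ : Measure ℝ) [SFinite μ] :
    (μ.prod μ) (sameSignSet ![1, 1] ![-1, 1]) = (μ.prod μ) (sameSignSet ![1, 1] ![1, -1]) := by
  have : sameSignSet ![1, 1] ![-1, 1] = Prod.swap ⁻¹' sameSignSet ![1, 1] ![1, -1] := by
    ext p
    simp only [sameSignSet, Set.mem_ofPred_eq, Set.mem_preimage, Prod.fst_swap, Prod.snd_swap,
      Matrix.cons_val_zero, Matrix.cons_val_one, Matrix.cons_val_fin_one, mul_one, mul_neg,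
      neg_add_eq_sub, ← sub_eq_add_neg]
    rw [add_comm p.2 p.1]
  rw [this, Measure.measurePreserving_swap.measure_preimage
    (measurableSet_sameSignSet _ _).nullMeasurableSet]

section Plane

variable (μ : Measure ℝ) [IsProbabilityMeasure μ] [NullSingletonClass μ]

lemma prod_sameSignSet_neg_eq_zero : (μ.prod μ) (sameSignSet ![1, 1] ![-1, -1]) = 0 := by
  refine measure_mono_null (fun p hp => ?_) (Measure.prod_setOf_snd_eq_null μ μ measurable_neg)
  simp only [sameSignSet, Set.mem_ofPred_eq, Matrix.cons_val_zero, Matrix.cons_val_one,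
    Matrix.cons_val_fin_one, mul_one, mul_neg, ← sub_eq_add_neg, ← neg_add',
    sgn_eq_sgn_neg_iff] at hp
  exact eq_neg_of_add_eq_zero_right hp

lemma prod_sameSignSet_inter_eq_zero :
    (μ.prod μ) (sameSignSet ![1, 1] ![1, -1] ∩ sameSignSet ![1, 1] ![-1, 1]) = 0 := by
  refine measure_mono_null (fun p ⟨h₂, h₃⟩ => ?_) (Measure.prod_setOf_snd_eq_null μ μ measurable_id)
  simp only [sameSignSet, Set.mem_ofPred_eq, Matrix.cons_val_zero, Matrix.cons_val_one,
    Matrix.cons_val_fin_one, mul_one, mul_neg, ← sub_eq_add_neg, neg_add_eq_sub] at h₂ h₃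
  have : sgn (p.1 - p.2) = sgn (-(p.1 - p.2)) := by rw [neg_sub, ← h₂, ← h₃]
  exact (sub_eq_zero.1 (sgn_eq_sgn_neg_iff.1 this)).symm

lemma sameSignSet_ae_eq_compl :
    sameSignSet ![1, 1] ![-1, 1] =ᵐ[μ.prod μ] ((sameSignSet ![1, 1] ![1, -1])ᶜ : Set (ℝ × ℝ)) := by
  have hdiag : ∀ᵐ p ∂μ.prod μ, p.2 ≠ id p.1 :=
    measure_eq_zero_iff_ae_notMem.1 (Measure.prod_setOf_snd_eq_null μ μ measurable_id)
  filter_upwards [hdiag] with p hp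
  refine propext ?_
  change p ∈ sameSignSet ![1, 1] ![-1, 1] ↔ p ∈ (sameSignSet ![1, 1] ![1, -1])ᶜ
  simp only [sameSignSet, Set.mem_ofPred_eq, Set.mem_compl_iff, Matrix.cons_val_zero,
    Matrix.cons_val_one, Matrix.cons_val_fin_one, mul_one, mul_neg, ← sub_eq_add_neg,
    neg_add_eq_sub]
  rw [← neg_sub]
  exact sgn_eq_sgn_neg_iff_ne (sub_ne_zero.2 hp.symm)

lemma prod_sameSignSet_eq_half : (μ.prod μ) (sameSignSet ![1, 1] ![1, -1]) = 2⁻¹ := by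
  have h := measure_add_measure_compl (μ := μ.prod μ) (measurableSet_sameSignSet ![1, 1] ![1, -1])
  rw [measure_univ, ← measure_congr (sameSignSet_ae_eq_compl μ), prod_sameSignSet_swap,
    ← two_mul, mul_comm] at h
  exact ENNReal.eq_inv_of_mul_eq_one_left h

end Plane

section Pairing

variable {ι κ α : Type*} [Fintype ι] [Fintype κ] [MeasurableSpace α]

def pairsAlong (e : κ ⊕ κ ≃ ι) (f : ι → α) (k : κ) : α × α :=
  (f (e (.inl k)), f (e (.inr k)))

theorem measurePreserving_pairsAlong (μ : Measure α) [SigmaFinite μ] (e : κ ⊕ κ ≃ ι) :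
    MeasurePreserving (pairsAlong e) (Measure.pi fun _ : ι => μ)
      (Measure.pi fun _ : κ => μ.prod μ) := by
  have h := (measurePreserving_arrowProdEquivProdArrow α α κ (fun _ => μ) (fun _ => μ)).symm.comp
    ((measurePreserving_sumPiEquivProdPi fun _ : κ ⊕ κ => μ).comp
      ((measurePreserving_piCongrLeft (fun _ : ι => μ) e).symm))
  convert h using 1
  ext f k <;> rfl

theorem pi_preimage_pairsAlong_univ_pi (μ : Measure α) [SigmaFinite μ] (e : κ ⊕ κ ≃ ι)
    {S : Set (α × α)} (hS : MeasurableSet S) :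
    Measure.pi (fun _ : ι => μ) (pairsAlong e ⁻¹' Set.univ.pi fun _ => S) =
      (μ.prod μ S) ^ Fintype.card κ := by
  rw [(measurePreserving_pairsAlong μ e).measure_preimage
    (MeasurableSet.univ_pi fun _ => hS).nullMeasurableSet, Measure.pi_pi, Finset.prod_const,
    Finset.card_univ]

end Pairing

section Channel

variable {Nr : ℕ} {Ω : Type*}

def reImCoords (H : Ω → Fin Nr → Fin 2 → ℂ) (ω : Ω) (p : (Fin Nr × Fin 2) × Bool) : ℝ :=
  if p.2 then (H ω p.1.1 p.1.2).im else (H ω p.1.1 p.1.2).re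

lemma measurable_reImCoords [MeasurableSpace Ω] {H : Ω → Fin Nr → Fin 2 → ℂ} (hH : Measurable H) :
    Measurable (reImCoords H) := by
  refine measurable_pi_lambda _ fun p => ?_
  rcases p with ⟨⟨m, j⟩, _ | _⟩
  · exact Complex.measurable_re.comp (hH.eval.eval)
  · exact Complex.measurable_im.comp (hH.eval.eval)

/-- `(m, b)` indexes a real coordinate of `Hx` (`b = true` for the imaginary part); `inl` and `inr`
select the column of `H`. -/
def transmitSplit (Nr : ℕ) : (Fin Nr × Bool) ⊕ (Fin Nr × Bool) ≃ (Fin Nr × Fin 2) × Bool where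
  toFun := Sum.elim (fun c => ((c.1, 0), c.2)) (fun c => ((c.1, 1), c.2))
  invFun p := if p.1.2 = 0 then .inl (p.1.1, p.2) else .inr (p.1.1, p.2)
  left_inv := by rintro (⟨m, b⟩ | ⟨m, b⟩) <;> simp
  right_inv := by
    rintro ⟨⟨m, j⟩, b⟩
    fin_cases j <;> simp

lemma confusionEvent_eq_preimage (H : Ω → Fin Nr → Fin 2 → ℂ) (a b c d : ℝ) :
    confusionEvent H ![(a : ℂ), b] ![(c : ℂ), d] =
      (fun ω => pairsAlong (transmitSplit Nr) (reImCoords H ω)) ⁻¹'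
        Set.univ.pi fun _ => sameSignSet ![a, b] ![c, d] := by
  ext ω
  simp [confusionEvent, sameSignSet, pairsAlong, transmitSplit, reImCoords, Fin.sum_univ_two]

lemma measurableSet_confusionEvent [MeasurableSpace Ω] {H : Ω → Fin Nr → Fin 2 → ℂ}
    (hH : Measurable H) (x x' : Fin 2 → ℂ) : MeasurableSet (confusionEvent H x x') := by
  have hsum : ∀ m (y : Fin 2 → ℂ), Measurable fun ω => ∑ j, H ω m j * y j := fun m y => by fun_prop
  simp only [confusionEvent, Set.ofPred_forall]
  exact MeasurableSet.iInter fun m =>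
    (measurableSet_eq_fun (measurable_sgn.comp (hsum m x).re)
      (measurable_sgn.comp (hsum m x').re)).inter
    (measurableSet_eq_fun (measurable_sgn.comp (hsum m x).im)
      (measurable_sgn.comp (hsum m x').im))

lemma measure_preimage_pairsAlong_reImCoords [MeasurableSpace Ω] (P : Measure Ω)
    {H : Ω → Fin Nr → Fin 2 → ℂ} (hH : Measurable H) (μ : Measure ℝ) [SigmaFinite μ]
    (hlaw : P.map (reImCoords H) = Measure.pi fun _ => μ) {S : Set (ℝ × ℝ)}
    (hS : MeasurableSet S) :
    P ((fun ω => pairsAlong (transmitSplit Nr) (reImCoords H ω)) ⁻¹' Set.univ.pi fun _ => S) =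
      (μ.prod μ S) ^ (2 * Nr) := by
  have hT : MeasurableSet (pairsAlong (transmitSplit Nr) ⁻¹' Set.univ.pi fun _ => S) :=
    (measurePreserving_pairsAlong μ _).measurable (MeasurableSet.univ_pi fun _ => hS)
  change P (reImCoords H ⁻¹' (pairsAlong (transmitSplit Nr) ⁻¹' Set.univ.pi fun _ => S)) = _
  rw [← Measure.map_apply (measurable_reImCoords hH) hT, hlaw,
    pi_preimage_pairsAlong_univ_pi μ _ hS, Fintype.card_prod, Fintype.card_fin,
    Fintype.card_bool, mul_comm]

end Channel

/-- Proposition 4 (tightness for BPSK, `Nt = 2`): with `x₁=(1,1)`, `x₂=(1,-1)`,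
`x₃=(-1,1)`, `x₄=(-1,-1)`, the event of confusing `x₁` with `x₄` is null, the
events of confusing `x₁` with `x₂` and with `x₃` are a.s. mutually exclusive,
and the union has probability `2·(1/2)^(2Nr)`. -/
theorem bpsk_two_antennas_tight_bound
    {Nr : ℕ} (hNr : 1 ≤ Nr)
    {Ω : Type*} [MeasurableSpace Ω] (P : Measure Ω) [IsProbabilityMeasure P]
    (H : Ω → Fin Nr → Fin 2 → ℂ) (hH : Measurable H)
    (hlaw : P.map (fun ω (p : (Fin Nr × Fin 2) × Bool) =>
        if p.2 then (H ω p.1.1 p.1.2).im else (H ω p.1.1 p.1.2).re) =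
      Measure.pi (fun _ : (Fin Nr × Fin 2) × Bool => gaussianReal 0 (1/2))) :
    P (confusionEvent H ![1, 1] ![-1, -1]) = 0 ∧
    P (confusionEvent H ![1, 1] ![1, -1] ∩ confusionEvent H ![1, 1] ![-1, 1]) = 0 ∧
    P (confusionEvent H ![1, 1] ![1, -1] ∪ confusionEvent H ![1, 1] ![-1, 1] ∪
        confusionEvent H ![1, 1] ![-1, -1]) =
      P (confusionEvent H ![1, 1] ![1, -1]) + P (confusionEvent H ![1, 1] ![-1, 1]) ∧
    P (confusionEvent H ![1, 1] ![1, -1] ∪ confusionEvent H ![1, 1] ![-1, 1] ∪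
        confusionEvent H ![1, 1] ![-1, -1]) =
      2 * (1/2 : ℝ≥0∞) ^ (2 * Nr) := by
  have : NullSingletonClass (gaussianReal 0 (1/2)) := nullSingletonClass_gaussianReal (by norm_num)
  have hP := fun {S} (hS : MeasurableSet S) =>
    measure_preimage_pairsAlong_reImCoords P hH (gaussianReal 0 (1/2)) hlaw hS
  have E₂ := confusionEvent_eq_preimage H 1 1 1 (-1)
  have E₃ := confusionEvent_eq_preimage H 1 1 (-1) 1
  have E₄ := confusionEvent_eq_preimage H 1 1 (-1) (-1)
  push_cast at E₂ E₃ E₄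
  have hpow : 2 * Nr ≠ 0 := by omega
  have h₄ : P (confusionEvent H ![1, 1] ![-1, -1]) = 0 := by
    rw [E₄, hP (measurableSet_sameSignSet _ _), prod_sameSignSet_neg_eq_zero, zero_pow hpow]
  have h₂₃ : P (confusionEvent H ![1, 1] ![1, -1] ∩ confusionEvent H ![1, 1] ![-1, 1]) = 0 := by
    rw [E₂, E₃, ← Set.preimage_inter, ← Set.pi_inter_distrib,
      hP ((measurableSet_sameSignSet _ _).inter (measurableSet_sameSignSet _ _)),
      prod_sameSignSet_inter_eq_zero, zero_pow hpow]
  have h₂ : P (confusionEvent H ![1, 1] ![1, -1]) = (1/2) ^ (2 * Nr) := by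
    rw [E₂, hP (measurableSet_sameSignSet _ _), prod_sameSignSet_eq_half, one_div]
  have h₃ : P (confusionEvent H ![1, 1] ![-1, 1]) = (1/2) ^ (2 * Nr) := by
    rw [E₃, hP (measurableSet_sameSignSet _ _), prod_sameSignSet_swap, prod_sameSignSet_eq_half,
      one_div]
  have hunion : P (confusionEvent H ![1, 1] ![1, -1] ∪ confusionEvent H ![1, 1] ![-1, 1] ∪
      confusionEvent H ![1, 1] ![-1, -1]) =
      P (confusionEvent H ![1, 1] ![1, -1]) + P (confusionEvent H ![1, 1] ![-1, 1]) := by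
    rw [measure_congr (union_ae_eq_left_of_ae_eq_empty (ae_eq_empty.2 h₄)),
      measure_union₀ (measurableSet_confusionEvent hH _ _).nullMeasurableSet h₂₃]
  exact ⟨h₄, h₂₃, hunion, by rw [hunion, h₂, h₃, ← two_mul]⟩
end
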